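/- arXiv:1112.6236 — 2 statements merged into one kernel-verified Lean document; each statement's English description precedes it below -/
import Mathlib

section
/- Let H be a complex Hilbert space and let B(H) denote the algebra of all bounded linear operators on H. Every 2-local inner derivation Δ : B(H) → B(H) is a derivation, i.e., Δ is additive, ℂ-homogeneous, and satisfies Δ(x·y) = Δ(x)·y + x·Δ(y) for all x, y ∈ B(H). -/
/-!
Fix a rank-one operator `T = ξ ⊗ η`. Two elements implementing `Δ` at `T` differ by an element
of the commutant of `T`, and every `d` commuting with `T` satisfies `⟪η, (d z - z d) ξ⟫ = 0`. So
one `a`, chosen for `T` alone, computes every matrix coefficient `⟪η, Δ z ξ⟫ = ⟪η, (a z - z a) ξ⟫`,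
and `Δ` is additive. Homogeneity and the Jordan identity `Δ (u * u) = Δ u * u + u * Δ u` come
straight from 2-locality. By Herstein's argument, in a 2-torsion-free prime ring such as `B(H)` a
Jordan derivation satisfies the Leibniz rule at every non-central `x`; at a central `x`,
2-locality at the pair `(x * y, y)` gives the Leibniz rule directly.
-/

open InnerProductSpace
open scoped InnerProductSpace

def IsPrimeRing (A : Type*) [Ring A] : Prop :=
  ∀ a b : A, (∀ z, a * z * b = 0) → a = 0 ∨ b = 0

section PrimeRing

variable {A : Type*} [Ring A] [IsAddTorsionFree A]

theorem IsPrimeRing.eq_zero_or_eq_zero_of_forall_mul_add_mul (hA : IsPrimeRing A) {a b : A}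
    (h : ∀ z, a * z * b + b * z * a = 0) : a = 0 ∨ b = 0 := by
  have key : ∀ z y, a * z * b * y * b = 0 := by
    intro z y
    rw [← nsmul_eq_zero_iff_right two_ne_zero, two_nsmul]
    linear_combination (norm := noncomm_ring) h (z * b * y) - b * z * h y + h z * (y * b)
  by_contra! hab
  have hazb : ∀ z, a * z * b = 0 := fun z => (hA _ _ (key z)).resolve_right hab.2
  exact hab.1 ((hA a b hazb).resolve_right hab.2)

end PrimeRing

def leibnizDefect {A : Type*} [Ring A] (D : A →+ A) (x y : A) : A :=
  D (x * y) - D x * y - x * D y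

theorem leibnizDefect_add_right {A : Type*} [Ring A] (D : A →+ A) (x y v : A) :
    leibnizDefect D x (y + v) = leibnizDefect D x y + leibnizDefect D x v := by
  simp only [leibnizDefect, mul_add, map_add]
  abel

def IsJordanDerivation {A : Type*} [Ring A] (D : A →+ A) : Prop :=
  ∀ u, D (u * u) = D u * u + u * D u

namespace IsJordanDerivation

variable {A : Type*} [Ring A] {D : A →+ A}

theorem map_mul_add_map_mul_swap (hD : IsJordanDerivation D) (u v : A) :
    D (u * v) + D (v * u) = D u * v + u * D v + D v * u + v * D u := by
  have h := hD (u + v)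
  rw [show (u + v) * (u + v) = u * u + v * v + (u * v + v * u) by noncomm_ring] at h
  simp only [map_add, hD u, hD v] at h
  linear_combination (norm := noncomm_ring) h

variable [IsAddTorsionFree A]

theorem map_sandwich (hD : IsJordanDerivation D) (u v : A) :
    D (u * v * u) = D u * v * u + u * D v * u + u * v * D u := by
  have h1 := hD.map_mul_add_map_mul_swap u (u * v + v * u)
  have h2 := hD.map_mul_add_map_mul_swap (u * u) v
  have h3 := hD.map_mul_add_map_mul_swap u v
  rw [show u * (u * v + v * u) = u * u * v + u * v * u by noncomm_ring,
    show (u * v + v * u) * u = u * v * u + v * (u * u) by noncomm_ring] at h1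
  simp only [map_add, hD u] at h1 h2
  rw [← nsmul_right_inj two_ne_zero, two_nsmul, two_nsmul]
  linear_combination (norm := noncomm_ring) h1 - h2 + u * h3 + h3 * u

theorem map_sandwich_add_map_sandwich_swap (hD : IsJordanDerivation D) (x z y : A) :
    D (x * z * y) + D (y * z * x) =
      D x * z * y + x * D z * y + x * z * D y + D y * z * x + y * D z * x + y * z * D x := by
  have h := hD.map_sandwich (x + y) z
  rw [show (x + y) * z * (x + y) = x * z * x + y * z * y + (x * z * y + y * z * x) by
    noncomm_ring] at h
  simp only [map_add, hD.map_sandwich] at h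
  linear_combination (norm := noncomm_ring) h

theorem leibnizDefect_mul_commutator_add_commutator_mul (hD : IsJordanDerivation D) (x y z : A) :
    leibnizDefect D x y * z * (x * y - y * x) + (x * y - y * x) * z * leibnizDefect D x y = 0 := by
  have e1 := hD.map_sandwich x (y * z * y)
  have e2 := hD.map_sandwich y (x * z * x)
  have e3 := hD.map_sandwich_add_map_sandwich_swap (x * y) z (y * x)
  have hxy := hD.map_mul_add_map_mul_swap x y
  rw [hD.map_sandwich y z] at e1
  rw [hD.map_sandwich x z] at e2
  rw [show x * y * z * (y * x) = x * (y * z * y) * x by noncomm_ring,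
    show y * x * z * (x * y) = y * (x * z * x) * y by noncomm_ring] at e3
  rw [leibnizDefect]
  linear_combination (norm := noncomm_ring) e3 - e1 - e2 + x * y * z * hxy + hxy * (z * (x * y))

theorem map_mul_of_not_commute (hD : IsJordanDerivation D) (hA : IsPrimeRing A) {x : A}
    (hx : ¬ ∀ w, Commute x w) (y : A) : D (x * y) = D x * y + x * D y := by
  have hδ : ∀ y, leibnizDefect D x y = 0 ∨ x * y - y * x = 0 := fun y =>
    hA.eq_zero_or_eq_zero_of_forall_mul_add_mul
      (hD.leibnizDefect_mul_commutator_add_commutator_mul x y)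
  -- Both sides of `hδ` are additive in `y`, and a group is not the union of two proper subgroups.
  obtain ⟨v, hv⟩ := not_forall.mp hx
  have hv' : x * v - v * x ≠ 0 := sub_ne_zero.mpr hv
  have hδv : leibnizDefect D x v = 0 := (hδ v).resolve_right hv'
  suffices leibnizDefect D x y = 0 by rwa [leibnizDefect, sub_sub, sub_eq_zero] at this
  refine (hδ y).elim id fun hy => ?_
  have hyv : x * (y + v) - (y + v) * x ≠ 0 := by
    rwa [show x * (y + v) - (y + v) * x = (x * y - y * x) + (x * v - v * x) by noncomm_ring,
      hy, zero_add]
  simpa [leibnizDefect_add_right, hδv] using (hδ (y + v)).resolve_right hyv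

end IsJordanDerivation

def IsTwoLocalInnerDerivation {A : Type*} [Ring A] (Δ : A → A) : Prop :=
  ∀ x y : A, ∃ a : A, Δ x = a * x - x * a ∧ Δ y = a * y - y * a

namespace IsTwoLocalInnerDerivation

variable {A : Type*} [Ring A] {Δ : A → A}

theorem map_smul {R : Type*} [Monoid R] [DistribMulAction R A] [IsScalarTower R A A]
    [SMulCommClass R A A] (hΔ : IsTwoLocalInnerDerivation Δ) (c : R) (x : A) :
    Δ (c • x) = c • Δ x := by
  obtain ⟨a, hcx, hx⟩ := hΔ (c • x) x
  rw [hcx, hx, mul_smul_comm, smul_mul_assoc, smul_sub]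

theorem isJordanDerivation (hΔ : IsTwoLocalInnerDerivation Δ)
    (hadd : ∀ x y, Δ (x + y) = Δ x + Δ y) : IsJordanDerivation (AddMonoidHom.mk' Δ hadd) := by
  intro u
  obtain ⟨a, hu, huu⟩ := hΔ u (u * u)
  simp only [AddMonoidHom.mk'_apply, hu, huu]
  noncomm_ring

theorem map_mul_of_commute (hΔ : IsTwoLocalInnerDerivation Δ) {x : A} (hx : ∀ w, Commute x w)
    (y : A) : Δ (x * y) = Δ x * y + x * Δ y := by
  obtain ⟨a, hxa, -⟩ := hΔ x x
  obtain ⟨b, hxyb, hyb⟩ := hΔ (x * y) y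
  rw [hxa, hxyb, hyb, (hx a).eq, sub_self, zero_mul, zero_add, mul_sub, ← mul_assoc,
    ← (hx b).eq, mul_assoc, mul_assoc]

end IsTwoLocalInnerDerivation

section BoundedOperators

variable {𝕜 E : Type*} [RCLike 𝕜] [NormedAddCommGroup E] [InnerProductSpace 𝕜 E]

theorem ContinuousLinearMap.isPrimeRing : IsPrimeRing (E →L[𝕜] E) := by
  intro a b h
  rw [or_iff_not_imp_right]
  intro hb
  obtain ⟨v, hv⟩ : ∃ v, b v ≠ 0 := by
    simpa [ContinuousLinearMap.ext_iff] using hb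
  ext ξ
  simpa [hv] using congr($(h (rankOne 𝕜 ξ (b v))) v)

theorem inner_commutator_apply_eq_zero_of_commute_rankOne {d : E →L[𝕜] E} {ξ η : E}
    (h : Commute d (rankOne 𝕜 ξ η)) (z : E →L[𝕜] E) : ⟪η, (d * z - z * d) ξ⟫_𝕜 = 0 := by
  rcases eq_or_ne ξ 0 with rfl | hξ
  · simp
  rcases eq_or_ne η 0 with rfl | hη
  · simp
  have hcomm : ∀ v, ⟪η, v⟫_𝕜 • d ξ = ⟪η, d v⟫_𝕜 • ξ := fun v => by simpa using congr($h.eq v)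
  obtain ⟨c, hdξ⟩ : ∃ c : 𝕜, d ξ = c • ξ := ⟨(⟪η, η⟫_𝕜)⁻¹ * ⟪η, d η⟫_𝕜, by
    rw [mul_smul, ← hcomm η, inv_smul_smul₀ (inner_self_ne_zero.mpr hη)]⟩
  have hdη : ∀ v, ⟪η, d v⟫_𝕜 = c * ⟪η, v⟫_𝕜 := fun v =>
    smul_left_injective 𝕜 hξ (by simp only [← hcomm, hdξ, smul_smul, mul_comm])
  rw [sub_apply, mul_apply_eq_comp, mul_apply_eq_comp, inner_sub_right, hdη, hdξ, map_smul,
    inner_smul_right, sub_self]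

namespace IsTwoLocalInnerDerivation

variable {Δ : (E →L[𝕜] E) → (E →L[𝕜] E)}

theorem exists_inner_apply_eq (hΔ : IsTwoLocalInnerDerivation Δ) (ξ η : E) :
    ∃ a, ∀ z, ⟪η, Δ z ξ⟫_𝕜 = ⟪η, (a * z - z * a) ξ⟫_𝕜 := by
  set T := rankOne 𝕜 ξ η
  obtain ⟨a, ha, -⟩ := hΔ T T
  refine ⟨a, fun z => ?_⟩
  obtain ⟨b, hz, hb⟩ := hΔ z T
  have hab : Commute (a - b) T := sub_eq_zero.mp <| by
    rw [show (a - b) * T - T * (a - b) = (a * T - T * a) - (b * T - T * b) by noncomm_ring,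
      ← ha, ← hb, sub_self]
  rw [hz, ← sub_eq_zero, ← inner_sub_right, ← sub_apply,
    show b * z - z * b - (a * z - z * a) = -((a - b) * z - z * (a - b)) by noncomm_ring,
    neg_apply, inner_neg_right,
    inner_commutator_apply_eq_zero_of_commute_rankOne hab z, neg_zero]

theorem map_add (hΔ : IsTwoLocalInnerDerivation Δ) (x y : E →L[𝕜] E) :
    Δ (x + y) = Δ x + Δ y := by
  ext ξ
  refine ext_inner_left 𝕜 fun η => ?_
  obtain ⟨a, ha⟩ := hΔ.exists_inner_apply_eq ξ η
  rw [add_apply, inner_add_right, ha, ha, ha, ← inner_add_right, ← add_apply]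
  congr 2
  noncomm_ring

end IsTwoLocalInnerDerivation

end BoundedOperators

theorem twoLocal_inner_derivation_is_derivation_BH_general
    (H : Type*) [NormedAddCommGroup H] [InnerProductSpace ℂ H]
    (Δ : (H →L[ℂ] H) → (H →L[ℂ] H))
    (h2loc : ∀ x y : H →L[ℂ] H, ∃ a : H →L[ℂ] H,
      Δ x = a * x - x * a ∧ Δ y = a * y - y * a) :
    (∀ x y : H →L[ℂ] H, Δ (x + y) = Δ x + Δ y) ∧
    (∀ (c : ℂ) (x : H →L[ℂ] H), Δ (c • x) = c • Δ x) ∧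
    (∀ x y : H →L[ℂ] H, Δ (x * y) = Δ x * y + x * Δ y) := by
  have hΔ : IsTwoLocalInnerDerivation Δ := h2loc
  refine ⟨hΔ.map_add, hΔ.map_smul, fun x y => ?_⟩
  by_cases hx : ∀ w, Commute x w
  · exact hΔ.map_mul_of_commute hx y
  have : IsAddTorsionFree (H →L[ℂ] H) := .of_isTorsionFree ℂ _
  exact (hΔ.isJordanDerivation hΔ.map_add).map_mul_of_not_commute
    ContinuousLinearMap.isPrimeRing hx y

/-- Every 2-local inner derivation on `B(H)`, the algebra of bounded linear
operators on a complex Hilbert space `H`, is a derivation. -/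
theorem twoLocal_inner_derivation_is_derivation_BH
    (H : Type*) [NormedAddCommGroup H] [InnerProductSpace ℂ H] [CompleteSpace H]
    (Δ : (H →L[ℂ] H) → (H →L[ℂ] H))
    (h2loc : ∀ x y : H →L[ℂ] H, ∃ a : H →L[ℂ] H,
      Δ x = a * x - x * a ∧ Δ y = a * y - y * a) :
    (∀ x y : H →L[ℂ] H, Δ (x + y) = Δ x + Δ y) ∧
    (∀ (c : ℂ) (x : H →L[ℂ] H), Δ (c • x) = c • Δ x) ∧
    (∀ x y : H →L[ℂ] H, Δ (x * y) = Δ x * y + x * Δ y) :=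
  twoLocal_inner_derivation_is_derivation_BH_general H Δ h2loc
end

section
/- Let n ≥ 2 and let x = Σ_{k=1}^{n−1} e_{k,k+1} ∈ M_n(ℂ), where e_{ij} denotes the standard matrix unit. Suppose b, c ∈ M_n(ℂ) satisfy b·x − x·b = c·x − x·c. Then the diagonal of b − c is constant: b_{ii} − c_{ii} = b_{jj} − c_{jj} for all indices i, j; equivalently, c_{ii} − c_{jj} = b_{ii} − b_{jj} for all i, j. -/
open Matrix

namespace Matrix

def upperShift (R : Type*) [Semiring R] (m : ℕ) : Matrix (Fin (m + 1)) (Fin (m + 1)) R :=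
  ∑ k : Fin m, single k.castSucc k.succ 1

variable {R : Type*} [Semiring R] {m : ℕ}

theorem mul_upperShift_apply_succ (d : Matrix (Fin (m + 1)) (Fin (m + 1)) R) (i : Fin (m + 1))
    (k : Fin m) : (d * upperShift R m) i k.succ = d i k.castSucc := by
  rw [upperShift, Matrix.mul_sum, sum_apply, Finset.sum_eq_single_of_mem k (Finset.mem_univ k)
    fun l _ hl => mul_single_apply_of_ne (M := d)
      (hbj := fun h => hl (Fin.succ_injective m h.symm)) ..]
  simp

theorem upperShift_mul_apply_castSucc (d : Matrix (Fin (m + 1)) (Fin (m + 1)) R) (k : Fin m)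
    (j : Fin (m + 1)) : (upperShift R m * d) k.castSucc j = d k.succ j := by
  rw [upperShift, Matrix.sum_mul, sum_apply, Finset.sum_eq_single_of_mem k (Finset.mem_univ k)
    fun l _ hl => single_mul_apply_of_ne (M := d)
      (h := fun h => hl (Fin.castSucc_injective m h.symm)) ..]
  simp

theorem diag_castSucc_eq_diag_succ_of_commute_upperShift
    {d : Matrix (Fin (m + 1)) (Fin (m + 1)) R} (hd : Commute d (upperShift R m)) (k : Fin m) :
    d k.castSucc k.castSucc = d k.succ k.succ := by
  rw [← mul_upperShift_apply_succ d k.castSucc k, hd.eq, upperShift_mul_apply_castSucc]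

end Matrix

theorem Fin.apply_eq_apply_of_castSucc_eq_succ {α : Type*} {m : ℕ} {f : Fin (m + 1) → α}
    (hf : ∀ k : Fin m, f k.castSucc = f k.succ) (i j : Fin (m + 1)) : f i = f j := by
  have eq_zero (i : Fin (m + 1)) : f i = f 0 := by
    induction i using Fin.induction with
    | zero => rfl
    | succ k ih => rw [← hf k, ih]
  rw [eq_zero i, eq_zero j]

theorem diagonal_diff_constant_of_commutator_eq_general
    (m : ℕ)
    (x : Matrix (Fin (m + 1)) (Fin (m + 1)) ℂ)
    (hx : x = ∑ k : Fin m, Matrix.single k.castSucc k.succ (1 : ℂ))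
    (b c : Matrix (Fin (m + 1)) (Fin (m + 1)) ℂ)
    (h : b * x - x * b = c * x - x * c) :
    ∀ i j : Fin (m + 1), b i i - c i i = b j j - c j j := by
  subst hx
  have hcomm : Commute (b - c) (upperShift ℂ m) := by
    rw [Commute, SemiconjBy, sub_mul, mul_sub, sub_eq_sub_iff_sub_eq_sub]
    exact h
  exact Fin.apply_eq_apply_of_castSucc_eq_succ fun k => by
    simpa only [Matrix.sub_apply] using diag_castSucc_eq_diag_succ_of_commute_upperShift hcomm k

/-- If two matrices `b, c ∈ Mₙ(ℂ)` (`n = m + 1 ≥ 2`) implement the same inner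
derivation at the connecting element `x = Σ_{k} e_{k,k+1}`, then the diagonal of
`b - c` is constant. -/
theorem diagonal_diff_constant_of_commutator_eq
    (m : ℕ) (hm : 1 ≤ m)
    (x : Matrix (Fin (m + 1)) (Fin (m + 1)) ℂ)
    (hx : x = ∑ k : Fin m, Matrix.single k.castSucc k.succ (1 : ℂ))
    (b c : Matrix (Fin (m + 1)) (Fin (m + 1)) ℂ)
    (h : b * x - x * b = c * x - x * c) :
    ∀ i j : Fin (m + 1), b i i - c i i = b j j - c j j :=
  diagonal_diff_constant_of_commutator_eq_general m x hx b c h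
end
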